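/- arXiv:1705.04395 — 9 statements merged into one kernel-verified Lean document; each statement's English description precedes it below -/
import Mathlib

section
/- Let G be a graph with a clique cover C = {C_0, C_1, ..., C_t} of width W(C) ≥ 1. Define the graph H̄ on vertex set V(G) whose edges are the non-edges xy of G with x ∈ C_l, y ∈ C_k and |l−k| ≥ W(C). Then the orientation of H̄ that directs xy from x to y whenever y ∈ C_l, x ∈ C_k with l ≥ k + W(C) is transitive; hence H̄ is a comparability graph. -/
open SimpleGraph

variable {V : Type*}

/-- An ordered clique cover of `G`, encoded as a labeling `f : V → ℕ` whose
fibers (the cliques `C_i = f⁻¹(i)`) are cliques of `G`. -/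
def IsOrderedCliqueCover (G : SimpleGraph V) (f : V → ℕ) : Prop :=
  ∀ n : ℕ, G.IsClique {v | f v = n}

/-- The width `W(C)` of an ordered clique cover: the maximum of `|j - i|` over
edges `xy` of `G` with `x ∈ C_i`, `y ∈ C_j`. -/
noncomputable def coverWidth (G : SimpleGraph V) (f : V → ℕ) : ℕ :=
  sSup {d : ℕ | ∃ x y, G.Adj x y ∧ d = Nat.dist (f x) (f y)}

/-- The clique cover width `CCW(G)`: minimum width over ordered clique covers. -/
noncomputable def CCW (G : SimpleGraph V) : ℕ :=
  sInf {w : ℕ | ∃ f : V → ℕ, IsOrderedCliqueCover G f ∧ coverWidth G f = w}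

/-- `s(G)`: the maximum number of leaves of an induced star in `G`
(an independent set whose members are all adjacent to a common center `r`
outside the set); defined as `1` when `|V(G)| ≤ 2`. -/
noncomputable def starNum (G : SimpleGraph V) [Fintype V] : ℕ :=
  if Fintype.card V ≤ 2 then 1
  else sSup {k : ℕ | ∃ (r : V) (L : Finset V), r ∉ L ∧ Gᶜ.IsClique (L : Set V) ∧
    (∀ v ∈ L, G.Adj r v) ∧ L.card = k}

/-- the graph of non-edges of `G` joining cliques at distance
`≥ W(C)` is oriented transitively by directing `x → y` when `f y ≥ f x + W(C)`;
hence it is a comparability graph. -/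
theorem stmt1 [Fintype V] (G : SimpleGraph V) (f : V → ℕ)
    (hf : IsOrderedCliqueCover G f) (hW : 1 ≤ coverWidth G f) (H : SimpleGraph V)
    (hH : ∀ x y, H.Adj x y ↔ x ≠ y ∧ ¬ G.Adj x y ∧ coverWidth G f ≤ Nat.dist (f x) (f y)) :
    (∀ x y, H.Adj x y ↔
      ((H.Adj x y ∧ f x + coverWidth G f ≤ f y) ∨ (H.Adj y x ∧ f y + coverWidth G f ≤ f x))) ∧
    Transitive (fun x y => H.Adj x y ∧ f x + coverWidth G f ≤ f y) := by

  set W := coverWidth G f with hWdef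
  have hfin : ({d : ℕ | ∃ x y, G.Adj x y ∧ d = Nat.dist (f x) (f y)}).Finite := by
    apply Set.Finite.subset (Set.finite_range (fun p : V × V => Nat.dist (f p.1) (f p.2)))
    rintro d ⟨x, y, -, rfl⟩
    exact ⟨(x, y), rfl⟩
  have hbd : ∀ x y, G.Adj x y → Nat.dist (f x) (f y) ≤ W := by
    intro x y hxy
    exact le_csSup hfin.bddAbove ⟨x, y, hxy, rfl⟩
  have key : ∀ x y, H.Adj x y → (f x + W ≤ f y ∨ f y + W ≤ f x) := by
    intro x y hxy
    obtain ⟨-, -, hd⟩ := (hH x y).1 hxy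
    rcases le_total (f x) (f y) with h | h
    · left; rw [Nat.dist_eq_sub_of_le h] at hd; omega
    · right; rw [Nat.dist_eq_sub_of_le_right h] at hd; omega
  constructor
  · intro x y
    constructor
    · intro hxy
      rcases key x y hxy with h | h
      · exact Or.inl ⟨hxy, h⟩
      · exact Or.inr ⟨hxy.symm, h⟩
    · rintro (⟨h, -⟩ | ⟨h, -⟩)
      · exact h
      · exact h.symm
  · rintro x y z ⟨hxy, hxyle⟩ ⟨hyz, hyzle⟩
    have hxz : f x + W ≤ f z ∧ f x + W + W ≤ f z := by omega
    refine ⟨(hH x z).2 ⟨?_, ?_, ?_⟩, hxz.1⟩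
    · intro h; subst h; omega
    · intro hadj
      have := hbd x z hadj
      rw [Nat.dist_eq_sub_of_le (by omega : f x ≤ f z)] at this
      omega
    · rw [Nat.dist_eq_sub_of_le (by omega : f x ≤ f z)]; omega
end

section
/- Let G be a graph with a clique cover C = {C_0, ..., C_t}, and let H be the graph on V(G) whose edges are the pairs xy with x ∈ C_l, y ∈ C_k and |l−k| < W(C) (together with all edges inside each C_i). Then grouping the cliques of C into consecutive blocks of size W(C) yields a clique cover S of H with width W(S) ≤ 1; in particular CCW(H) ≤ 1. -/
open SimpleGraph

variable {V : Type*}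

lemma dist_lt_of_div_eq (W a b : ℕ) (hW : 0 < W) (h : a / W = b / W) :
    Nat.dist a b < W := by
  have h1 : a < b + W := by
    by_contra hc
    push_neg at hc
    have : b / W + 1 ≤ a / W := by
      rw [← Nat.add_div_right b hW]; exact Nat.div_le_div_right hc
    omega
  have h2 : b < a + W := by
    by_contra hc
    push_neg at hc
    have : a / W + 1 ≤ b / W := by
      rw [← Nat.add_div_right a hW]; exact Nat.div_le_div_right hc
    omega
  simp only [Nat.dist]; omega

lemma div_dist_le_one (W a b : ℕ) (hW : 0 < W) (h : Nat.dist a b < W) :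
    Nat.dist (a / W) (b / W) ≤ 1 := by
  have hab : a ≤ b + W ∧ b ≤ a + W := by
    simp only [Nat.dist] at h; omega
  have h1 : a / W ≤ b / W + 1 := by
    rw [← Nat.add_div_right b hW]; exact Nat.div_le_div_right hab.1
  have h2 : b / W ≤ a / W + 1 := by
    rw [← Nat.add_div_right a hW]; exact Nat.div_le_div_right hab.2
  simp only [Nat.dist]; omega

/-- the graph `H` joining pairs of vertices lying in cliques of `C`
at distance `< W(C)` has the blocks of `W(C)` consecutive cliques as a clique
cover of width at most `1`; in particular `CCW(H) ≤ 1`. -/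
theorem stmt2 [Fintype V] (G : SimpleGraph V) (f : V → ℕ)
    (hf : IsOrderedCliqueCover G f) (hW : 1 ≤ coverWidth G f) (H : SimpleGraph V)
    (hH : ∀ x y, H.Adj x y ↔ x ≠ y ∧ Nat.dist (f x) (f y) < coverWidth G f) :
    IsOrderedCliqueCover H (fun v => f v / coverWidth G f) ∧
    coverWidth H (fun v => f v / coverWidth G f) ≤ 1 ∧
    CCW H ≤ 1 := by
  set W := coverWidth G f with hWdef
  have hW0 : 0 < W := hW
  have hcov : IsOrderedCliqueCover H (fun v => f v / W) := by
    intro n x hx y hy hxy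
    rw [hH]
    refine ⟨hxy, ?_⟩
    simp only [Set.mem_setOf_eq] at hx hy
    exact dist_lt_of_div_eq W _ _ hW0 (hx.trans hy.symm)
  have hle : coverWidth H (fun v => f v / W) ≤ 1 := by
    apply csSup_le'
    rintro d ⟨x, y, hxy, rfl⟩
    rw [hH] at hxy
    exact div_dist_le_one W _ _ hW0 hxy.2
  exact ⟨hcov, hle, le_trans (Nat.sInf_le ⟨_, hcov, rfl⟩) hle⟩
end

section
/- For any graph G and any ordered clique cover C = {C_0, ..., C_t} of G, W(C) ≥ ⌈s(G)/2⌉ − 1, where s(G) is the maximum number of leaves in an induced star of G. -/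
open SimpleGraph

variable {V : Type*}

/-- every ordered clique cover has width at least `⌈s(G)/2⌉ - 1`. -/
theorem stmt6 [Fintype V] (G : SimpleGraph V) (f : V → ℕ)
    (hf : IsOrderedCliqueCover G f) :
    (starNum G + 1) / 2 - 1 ≤ coverWidth G f := by
  by_cases hc : Fintype.card V ≤ 2
  · simp [starNum, hc]
  · set W := coverWidth G f with hW
    have hdist : ∀ x y, G.Adj x y → Nat.dist (f x) (f y) ≤ W := by
      intro x y hxy
      apply le_csSup
      · apply Set.Finite.bddAbove
        apply Set.Finite.subset (Set.finite_range (fun p : V × V => Nat.dist (f p.1) (f p.2)))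
        rintro d ⟨x, y, _, rfl⟩
        exact ⟨(x, y), rfl⟩
      · exact ⟨x, y, hxy, rfl⟩
    have hS : starNum G ∈ {k : ℕ | ∃ (r : V) (L : Finset V), r ∉ L ∧ Gᶜ.IsClique (L : Set V) ∧
        (∀ v ∈ L, G.Adj r v) ∧ L.card = k} := by
      rw [starNum, if_neg hc]
      apply Nat.sSup_mem
      · have hpos : 0 < Fintype.card V := by omega
        obtain ⟨r⟩ := Fintype.card_pos_iff.mp hpos
        exact ⟨0, r, ∅, by simp⟩
      · refine ⟨Fintype.card V, ?_⟩
        rintro k ⟨r, L, _, _, _, rfl⟩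
        exact le_trans (Finset.card_le_univ L) (le_of_eq Finset.card_univ)
    obtain ⟨r, L, hrL, hIndep, hAdj, hcard⟩ := hS
    have hinj : Set.InjOn f (L : Set V) := by
      intro x hx y hy hxy
      by_contra hne
      have hadj : G.Adj x y := hf (f x) rfl hxy.symm hne
      exact (hIndep hx hy hne).2 hadj
    have hsub : ∀ x ∈ L, f x ∈ Finset.Icc (f r - W) (f r + W) := by
      intro x hx
      have := hdist r x (hAdj x hx)
      simp only [Nat.dist] at this
      simp only [Finset.mem_Icc]
      omega
    have hcard2 : L.card ≤ (Finset.Icc (f r - W) (f r + W)).card :=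
      Finset.card_le_card_of_injOn f hsub (fun x hx y hy h =>
        hinj (Finset.mem_coe.mpr hx) (Finset.mem_coe.mpr hy) h)
    have hIcc : (Finset.Icc (f r - W) (f r + W)).card ≤ 2 * W + 1 := by
      rw [Nat.card_Icc]; omega
    omega
end

section
/- For any graph G, CCW(G) ≥ ⌈s(G)/2⌉ − 1, where s(G) is the maximum number of leaves in an induced star of G. -/
open SimpleGraph

variable {V : Type*}

/-- `CCW(G) ≥ ⌈s(G)/2⌉ - 1`. -/
theorem stmt7 [Fintype V] (G : SimpleGraph V) :
    (starNum G + 1) / 2 - 1 ≤ CCW G := by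
  classical
  by_cases h2 : Fintype.card V ≤ 2
  · simp [starNum, h2]
  have hV : Nonempty V := by
    rw [← Fintype.card_pos_iff]; omega
  -- The CCW set is nonempty: take an injective labeling
  obtain ⟨g, hg⟩ : ∃ g : V → ℕ, Function.Injective g :=
    Countable.exists_injective_nat V
  have hCCWne : {w : ℕ | ∃ f : V → ℕ, IsOrderedCliqueCover G f ∧ coverWidth G f = w}.Nonempty := by
    refine ⟨coverWidth G g, g, ?_, rfl⟩
    intro n u hu v hv huv
    exact absurd (hg (hu.trans hv.symm)) huv
  obtain ⟨f, hcov, hwf⟩ := Nat.sInf_mem hCCWne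
  set w := CCW G with hw
  -- distances along edges are at most the width
  have hbdd : BddAbove {d : ℕ | ∃ x y, G.Adj x y ∧ d = Nat.dist (f x) (f y)} := by
    refine (Set.Finite.subset (Set.finite_range
      (fun p : V × V => Nat.dist (f p.1) (f p.2))) ?_).bddAbove
    rintro d ⟨x, y, _, rfl⟩; exact ⟨(x, y), rfl⟩
  have hdist : ∀ x y, G.Adj x y → Nat.dist (f x) (f y) ≤ w := by
    intro x y hxy
    have h : Nat.dist (f x) (f y) ≤ coverWidth G f := le_csSup hbdd ⟨x, y, hxy, rfl⟩
    rw [hwf] at h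
    exact h
  -- main bound: starNum ≤ 2 * w + 1
  have hmain : starNum G ≤ 2 * w + 1 := by
    rw [starNum, if_neg h2]
    have hSne : ({k : ℕ | ∃ (r : V) (L : Finset V), r ∉ L ∧ Gᶜ.IsClique (L : Set V) ∧
        (∀ v ∈ L, G.Adj r v) ∧ L.card = k}).Nonempty := by
      obtain ⟨r⟩ := hV
      exact ⟨0, r, ∅, by simp, by simp, by simp, rfl⟩
    refine csSup_le hSne ?_
    rintro k ⟨r, L, hrL, hind, hadj, rfl⟩
    -- f is injective on L
    have hinj : Set.InjOn f L := by
      intro u hu v hv huv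
      by_contra hne
      have hGuv : G.Adj u v := hcov (f u) (by simp) (by simp [huv]) hne
      have : Gᶜ.Adj u v := hind hu hv hne
      exact this.2 hGuv
    have hsub : L.image f ⊆ Finset.Icc (f r - w) (f r + w) := by
      intro m hm
      obtain ⟨v, hv, rfl⟩ := Finset.mem_image.mp hm
      have := hdist r v (hadj v hv)
      rw [Nat.dist] at this
      simp only [Finset.mem_Icc]
      omega
    calc L.card = (L.image f).card := (Finset.card_image_of_injOn hinj).symm
      _ ≤ (Finset.Icc (f r - w) (f r + w)).card := Finset.card_le_card hsub
      _ = f r + w + 1 - (f r - w) := Nat.card_Icc _ _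
      _ ≤ 2 * w + 1 := by omega
  omega
end

section
/- Let G be the intersection of graphs H_1, ..., H_d on a common vertex set (E(G) = ∩_{i=1}^d E(H_i)). Then s(G) < R(s(H_1)+1, s(H_2)+1, ..., s(H_d)+1), where R denotes the multicolor Ramsey number. -/
open SimpleGraph

variable {V : Type*}

/-- `RamseyProp t n` : every coloring of the edges of `K_t` with `d` colors has,
for some color `i`, a monochromatic complete subgraph on `n i` vertices. -/
def RamseyProp (t : ℕ) {d : ℕ} (n : Fin d → ℕ) : Prop :=
  ∀ c : Sym2 (Fin t) → Fin d, ∃ (i : Fin d) (s : Finset (Fin t)),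
    s.card = n i ∧ ∀ a ∈ s, ∀ b ∈ s, a ≠ b → c s(a, b) = i

/-- The multicolor Ramsey number `R(n_1, ..., n_d)`. -/
noncomputable def ramseyNumber {d : ℕ} (n : Fin d → ℕ) : ℕ :=
  sInf {t : ℕ | RamseyProp t n}

lemma ramsey_key : ∀ N : ℕ, ∀ {d : ℕ}, 0 < d → ∀ n : Fin d → ℕ, (∑ i, n i) ≤ N →
    ∃ t : ℕ, ∀ (α : Type) [DecidableEq α] (S : Finset α) (c : Sym2 α → Fin d), t ≤ S.card →
      ∃ i : Fin d, ∃ u : Finset α, u ⊆ S ∧ u.card = n i ∧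
        ∀ a ∈ u, ∀ b ∈ u, a ≠ b → c s(a, b) = i := by
  intro N
  induction N with
  | zero =>
    intro d hd n hsum
    refine ⟨0, fun α _ S c _ => ⟨⟨0, hd⟩, ∅, Finset.empty_subset _, ?_, by simp⟩⟩
    have h0 : n ⟨0, hd⟩ = 0 :=
      Finset.sum_eq_zero_iff.mp (Nat.le_zero.mp hsum) ⟨0, hd⟩ (Finset.mem_univ _)
    simp [h0]
  | succ N ih =>
    intro d hd n hsum
    by_cases hsmall : ∃ i, n i ≤ 1
    · obtain ⟨i, hi⟩ := hsmall
      refine ⟨1, fun α _ S c hS => ?_⟩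
      obtain ⟨u, huS, hu⟩ := Finset.exists_subset_card_eq (le_trans hi hS)
      exact ⟨i, u, huS, hu, fun a ha b hb hab =>
        absurd (Finset.card_le_one.mp (by omega : u.card ≤ 1) a ha b hb) hab⟩
    · push_neg at hsmall
      have h2 : ∀ i, 2 ≤ n i := fun i => hsmall i
      have hupd : ∀ i : Fin d, (∑ j, Function.update n i (n i - 1) j) ≤ N := by
        intro i
        rw [Finset.sum_update_of_mem (Finset.mem_univ i)]
        have h1 : ∑ j, n j = n i + ∑ j ∈ Finset.univ \ {i}, n j := by
          rw [← Finset.erase_eq]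
          exact (Finset.add_sum_erase _ _ (Finset.mem_univ i)).symm
        have := h2 i
        omega
      choose t ht using fun i => ih hd _ (hupd i)
      refine ⟨1 + ∑ i, t i, fun α _ S c hS => ?_⟩
      obtain ⟨v, hv⟩ := Finset.card_pos.mp (lt_of_lt_of_le (Nat.succ_le_iff.mp (Nat.le_add_right 1 _)) hS)
      have hcard' : ∑ i, t i ≤ (S.erase v).card := by
        have := Finset.card_erase_of_mem hv
        omega
      set Nb := fun i : Fin d => (S.erase v).filter (fun w => c s(v, w) = i) with hNb
      have hfib : (S.erase v).card = ∑ i, (Nb i).card :=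
        Finset.card_eq_sum_card_fiberwise (fun w _ => Finset.mem_univ (c s(v, w)))
      have hexi : ∃ i, t i ≤ (Nb i).card := by
        by_contra hcon
        push_neg at hcon
        have hlt : ∑ i, (Nb i).card < ∑ i, t i :=
          Finset.sum_lt_sum_of_nonempty (Finset.univ_nonempty_iff.mpr ⟨⟨0, hd⟩⟩)
            (fun i _ => hcon i)
        omega
      obtain ⟨i, hti⟩ := hexi
      obtain ⟨j, u, huN, hucard, humono⟩ := ht i α (Nb i) c hti
      have huS' : u ⊆ S.erase v := huN.trans (Finset.filter_subset _ _)
      by_cases hji : j = i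
      · subst hji
        rw [Function.update_self] at hucard
        have hvu : v ∉ u := fun h => Finset.notMem_erase v S (huS' h)
        refine ⟨j, insert v u, ?_, ?_, ?_⟩
        · exact Finset.insert_subset hv (huS'.trans (Finset.erase_subset _ _))
        · rw [Finset.card_insert_of_notMem hvu, hucard]
          have := h2 j; omega
        · intro a ha b hb hab
          rcases Finset.mem_insert.mp ha with rfl | ha'
          · rcases Finset.mem_insert.mp hb with rfl | hb'
            · exact absurd rfl hab
            · exact (Finset.mem_filter.mp (huN hb')).2
          · rcases Finset.mem_insert.mp hb with rfl | hb'
            · rw [Sym2.eq_swap]; exact (Finset.mem_filter.mp (huN ha')).2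
            · exact humono a ha' b hb' hab
      · rw [Function.update_of_ne hji] at hucard
        exact ⟨j, u, huS'.trans (Finset.erase_subset _ _), hucard, humono⟩

lemma ramsey_nonempty {d : ℕ} (hd : 1 ≤ d) (n : Fin d → ℕ) : ∃ t, RamseyProp t n := by
  obtain ⟨t, ht⟩ := ramsey_key (∑ i, n i) hd n le_rfl
  refine ⟨t, fun c => ?_⟩
  obtain ⟨i, u, _, hcard, hmono⟩ := ht (Fin t) Finset.univ c (by simp)
  exact ⟨i, u, hcard, hmono⟩

lemma star_set_bdd {V : Type*} [Fintype V] (G' : SimpleGraph V) :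
    BddAbove {k : ℕ | ∃ (r : V) (L : Finset V), r ∉ L ∧ G'ᶜ.IsClique (L : Set V) ∧
      (∀ v ∈ L, G'.Adj r v) ∧ L.card = k} := by
  refine ⟨Fintype.card V, ?_⟩
  rintro k ⟨r, L, -, -, -, rfl⟩
  exact Finset.card_le_univ L

/-- if `E(G) = ∩ E(H_i)` then
`s(G) < R(s(H_1)+1, ..., s(H_d)+1)`. -/
theorem stmt9 [Fintype V] {d : ℕ} (hd : 1 ≤ d) (G : SimpleGraph V)
    (H : Fin d → SimpleGraph V)
    (hGH : ∀ x y, G.Adj x y ↔ ∀ i, (H i).Adj x y) :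
    starNum G < ramseyNumber (fun i => starNum (H i) + 1) := by
  set n : Fin d → ℕ := fun i => starNum (H i) + 1 with hn
  have hne : {t | RamseyProp t n}.Nonempty := ramsey_nonempty hd n
  have hR : RamseyProp (ramseyNumber n) n := Nat.sInf_mem hne
  set t := ramseyNumber n with htdef
  by_contra hcon
  push_neg at hcon
  by_cases hV : Fintype.card V ≤ 2
  · have hG1 : starNum G = 1 := by rw [starNum, if_pos hV]
    obtain ⟨i, s, hcard, -⟩ := hR (fun _ => ⟨0, hd⟩)
    have hsle : s.card ≤ t := by
      have := Finset.card_le_univ s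
      simpa using this
    have hHi1 : starNum (H i) = 1 := by rw [starNum, if_pos hV]
    rw [hn] at hcard
    simp only [hHi1] at hcard
    omega
  · push_neg at hV
    have hVne : Nonempty V := by
      rw [← Fintype.card_pos_iff]; omega
    obtain ⟨r0⟩ := hVne
    have hGval : starNum G = sSup {k : ℕ | ∃ (r : V) (L : Finset V), r ∉ L ∧
        Gᶜ.IsClique (L : Set V) ∧ (∀ v ∈ L, G.Adj r v) ∧ L.card = k} := by
      rw [starNum, if_neg (by omega)]
    have hSGne : {k : ℕ | ∃ (r : V) (L : Finset V), r ∉ L ∧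
        Gᶜ.IsClique (L : Set V) ∧ (∀ v ∈ L, G.Adj r v) ∧ L.card = k}.Nonempty :=
      ⟨0, r0, ∅, by simp, by simp, by simp, rfl⟩
    have hmem := hGval ▸ Nat.sSup_mem hSGne (star_set_bdd G)
    obtain ⟨r, L, hrL, hLind, hradj, hLcard⟩ := hmem
    classical
    have htle : t ≤ L.card := by omega
    obtain ⟨M, hML, hMcard⟩ := Finset.exists_subset_card_eq htle
    set emb : Fin t → V := fun a => ((Finset.equivFinOfCardEq hMcard).symm a : V) with hemb
    have hembM : ∀ a, emb a ∈ M := fun a => ((Finset.equivFinOfCardEq hMcard).symm a).2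
    have hembinj : Function.Injective emb := fun a b h => by
      have h2 : (Finset.equivFinOfCardEq hMcard).symm a = (Finset.equivFinOfCardEq hMcard).symm b :=
        Subtype.ext h
      exact (Finset.equivFinOfCardEq hMcard).symm.injective h2
    have hnonadj : ∀ a b : Fin t, a ≠ b → ¬ G.Adj (emb a) (emb b) := by
      intro a b hab
      have hadj : Gᶜ.Adj (emb a) (emb b) :=
        hLind (hML (hembM a)) (hML (hembM b)) (fun h => hab (hembinj h))
      exact hadj.2
    have hnadjH : ∀ a b : Fin t, a ≠ b → ∃ i, ¬ (H i).Adj (emb a) (emb b) := by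
      intro a b hab
      have h1 := hnonadj a b hab
      rw [hGH] at h1
      push_neg at h1
      exact h1
    set f : Fin t → Fin t → Fin d := fun x y =>
      if h : ∃ i, ¬ (H i).Adj (emb x) (emb y) then h.choose else ⟨0, hd⟩ with hf
    set c : Sym2 (Fin t) → Fin d := fun p => f p.out.1 p.out.2 with hc
    obtain ⟨i, s, hscard, hsmono⟩ := hR c
    have hkey : ∀ a ∈ s, ∀ b ∈ s, a ≠ b → ¬ (H i).Adj (emb a) (emb b) := by
      intro a ha b hb hab
      have hcs := hsmono a ha b hb hab
      set p := s(a, b) with hp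
      have hout : s(p.out.1, p.out.2) = p := Quot.out_eq p
      have hcases := Sym2.eq_iff.mp hout
      have hxy : p.out.1 ≠ p.out.2 := by
        rcases hcases with ⟨h1, h2⟩ | ⟨h1, h2⟩ <;> rw [h1, h2] <;>
          first | exact hab | exact hab.symm
      have hex := hnadjH p.out.1 p.out.2 hxy
      have hval : c p = hex.choose := by
        rw [hc]
        simp only [hf]
        rw [dif_pos hex]
      have hchoose : hex.choose = i := by rw [← hval]; exact hcs
      have hspec := hex.choose_spec
      rw [hchoose] at hspec
      rcases hcases with ⟨h1, h2⟩ | ⟨h1, h2⟩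
      · rwa [h1, h2] at hspec
      · rw [h1, h2] at hspec
        exact fun hadj => hspec hadj.symm
    have hHival : starNum (H i) = sSup {k : ℕ | ∃ (r : V) (L : Finset V), r ∉ L ∧
        (H i)ᶜ.IsClique (L : Set V) ∧ (∀ v ∈ L, (H i).Adj r v) ∧ L.card = k} := by
      rw [starNum, if_neg (by omega)]
    have hwit : starNum (H i) + 1 ∈ {k : ℕ | ∃ (r : V) (L : Finset V), r ∉ L ∧
        (H i)ᶜ.IsClique (L : Set V) ∧ (∀ v ∈ L, (H i).Adj r v) ∧ L.card = k} := by
      refine ⟨r, s.image emb, ?_, ?_, ?_, ?_⟩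
      · intro hmem'
        obtain ⟨a, -, ha⟩ := Finset.mem_image.mp hmem'
        exact hrL (ha ▸ hML (hembM a))
      · intro x hx y hy hxy
        rw [Finset.mem_coe, Finset.mem_image] at hx hy
        obtain ⟨a, ha, rfl⟩ := hx
        obtain ⟨b, hb, rfl⟩ := hy
        have hab : a ≠ b := fun h => hxy (by rw [h])
        exact ⟨hxy, hkey a ha b hb hab⟩
      · intro v hv
        obtain ⟨a, -, rfl⟩ := Finset.mem_image.mp hv
        exact (hGH r (emb a)).mp (hradj _ (hML (hembM a))) i
      · rw [Finset.card_image_of_injective _ hembinj, hscard]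
    have hfin : starNum (H i) + 1 ≤ starNum (H i) := by
      have h := le_csSup (star_set_bdd (H i)) hwit
      rwa [← hHival] at h
    omega
end

section
/- For any graph G with CCW(G) ≥ 1, s(G) < R(3, 3, ..., 3, 4) where 3 appears CCW(G)−1 times and R is the multicolor Ramsey number. -/
open SimpleGraph

variable {V : Type*}

/-- Finite multicolor Ramsey theorem, phrased over subsets of `ℕ`. -/
private lemma sym2_ramsey : ∀ (N d : ℕ) (n : Fin d → ℕ), (∑ i, n i) ≤ N →
    ∃ t : ℕ, 0 < t ∧ ∀ (c : Sym2 ℕ → Fin d) (s : Finset ℕ), t ≤ s.card →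
      ∃ (i : Fin d) (u : Finset ℕ), u ⊆ s ∧ u.card = n i ∧
        ∀ a ∈ u, ∀ b ∈ u, a ≠ b → c s(a, b) = i := by
  intro N
  induction N with
  | zero =>
    intro d n hsum
    rcases Nat.eq_zero_or_pos d with hd | hd
    · subst hd
      refine ⟨1, one_pos, fun c s hs => ?_⟩
      have hsne : s.Nonempty := Finset.card_pos.mp (by omega)
      obtain ⟨a, _⟩ := hsne
      exact (c s(a, a)).elim0
    · refine ⟨1, one_pos, fun c s hs => ⟨⟨0, hd⟩, ∅, Finset.empty_subset s, ?_, by simp⟩⟩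
      have h0 : n ⟨0, hd⟩ = 0 :=
        Finset.sum_eq_zero_iff.mp (Nat.le_zero.mp hsum) _ (Finset.mem_univ _)
      simp [h0]
  | succ N ih =>
    intro d n hsum
    rcases Nat.eq_zero_or_pos d with hd | hd
    · subst hd
      refine ⟨1, one_pos, fun c s hs => ?_⟩
      have hsne : s.Nonempty := Finset.card_pos.mp (by omega)
      obtain ⟨a, _⟩ := hsne
      exact (c s(a, a)).elim0
    by_cases h0 : ∃ i, n i = 0
    · obtain ⟨i, hi⟩ := h0
      exact ⟨1, one_pos, fun c s hs => ⟨i, ∅, Finset.empty_subset s, by simp [hi], by simp⟩⟩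
    by_cases h1 : ∃ i, n i = 1
    · obtain ⟨i, hi⟩ := h1
      refine ⟨1, one_pos, fun c s hs => ?_⟩
      have hsne : s.Nonempty := Finset.card_pos.mp (by omega)
      obtain ⟨a, ha⟩ := hsne
      refine ⟨i, {a}, by simpa using ha, by simp [hi], ?_⟩
      intro x hx y hy hxy
      simp only [Finset.mem_singleton] at hx hy
      subst hx; subst hy; exact absurd rfl hxy
    push_neg at h0 h1
    have h2 : ∀ i, 2 ≤ n i := by
      intro i; have := h0 i; have := h1 i; omega
    have H : ∀ i : Fin d, ∃ t : ℕ, 0 < t ∧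
        ∀ (c : Sym2 ℕ → Fin d) (s : Finset ℕ), t ≤ s.card →
          ∃ (j : Fin d) (u : Finset ℕ), u ⊆ s ∧ u.card = Function.update n i (n i - 1) j ∧
            ∀ a ∈ u, ∀ b ∈ u, a ≠ b → c s(a, b) = j := by
      intro i
      apply ih
      have hup := Finset.sum_update_of_mem (Finset.mem_univ i) n (n i - 1)
      have herase : n i + ∑ x ∈ Finset.univ.erase i, n x = ∑ x, n x :=
        Finset.add_sum_erase _ n (Finset.mem_univ i)
      rw [← Finset.erase_eq] at hup
      have := h2 i
      omega
    choose tf htfpos hprop using H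
    refine ⟨1 + ∑ i, tf i, by omega, fun c s hs => ?_⟩
    have hsne : s.Nonempty := Finset.card_pos.mp (by omega)
    obtain ⟨v, hv⟩ := hsne
    have hs'card : ∑ i, tf i ≤ (s.erase v).card := by
      rw [Finset.card_erase_of_mem hv]; omega
    have hfib : (s.erase v).card = ∑ i, ((s.erase v).filter fun x => c s(v, x) = i).card :=
      Finset.card_eq_sum_card_fiberwise (fun x _ => Finset.mem_univ _)
    have hex : ∃ i, tf i ≤ ((s.erase v).filter fun x => c s(v, x) = i).card := by
      by_contra hcon
      push_neg at hcon
      have hlt : ∑ i, ((s.erase v).filter fun x => c s(v, x) = i).card < ∑ i, tf i :=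
        Finset.sum_lt_sum_of_nonempty ⟨⟨0, hd⟩, Finset.mem_univ _⟩ (fun i _ => hcon i)
      omega
    obtain ⟨i, hfi⟩ := hex
    obtain ⟨j, u, husub, hucard, humono⟩ := hprop i c _ hfi
    have husub' : u ⊆ s.erase v := fun x hx => Finset.mem_of_mem_filter x (husub hx)
    by_cases hji : j = i
    · subst hji
      have hvu : v ∉ u := fun hvmem => (Finset.mem_erase.mp (husub' hvmem)).1 rfl
      refine ⟨j, insert v u, ?_, ?_, ?_⟩
      · intro x hx
        rcases Finset.mem_insert.mp hx with rfl | hx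
        · exact hv
        · exact Finset.mem_of_mem_erase (husub' hx)
      · rw [Finset.card_insert_of_notMem hvu, hucard, Function.update_self]
        have := h2 j; omega
      · intro a ha b hb hab
        rcases Finset.mem_insert.mp ha with hav | ha'
        · rcases Finset.mem_insert.mp hb with hbv | hb'
          · exact absurd (hav.trans hbv.symm) hab
          · rw [hav]
            exact (Finset.mem_filter.mp (husub hb')).2
        · rcases Finset.mem_insert.mp hb with hbv | hb'
          · rw [hbv, Sym2.eq_swap]
            exact (Finset.mem_filter.mp (husub ha')).2
          · exact humono a ha' b hb' hab
    · refine ⟨j, u, fun x hx => Finset.mem_of_mem_erase (husub' hx), ?_, humono⟩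
      rwa [Function.update_of_ne hji] at hucard

/-- The "bad coloring" lemma: if `t` vertices have labels pairwise distinct and all
within `Nat.dist ≤ w` of a center label `R`, then `K_t` has a coloring with no
mono triangle in the first `w-1` colors and no mono `K_4` in the last color. -/
private lemma no_ramsey {w t : ℕ} (hw : 1 ≤ w) (F : Fin t → ℕ) (R : ℕ)
    (hwin : ∀ x, Nat.dist R (F x) ≤ w)
    (hne : ∀ x y : Fin t, x ≠ y → F x ≠ F y) :
    ¬ RamseyProp t (fun i : Fin w => if (i : ℕ) + 1 < w then 3 else 4) := by
  intro hR
  obtain ⟨i, u, hcard, hmono⟩ := hR (Sym2.lift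
    ⟨fun x y => (⟨min (Nat.dist (F x) (F y)) w - 1, by
        have := Nat.min_le_right (Nat.dist (F x) (F y)) w; omega⟩ : Fin w),
      fun x y => by simp [Nat.dist_comm]⟩)
  have hval : ∀ x ∈ u, ∀ y ∈ u, x ≠ y →
      min (Nat.dist (F x) (F y)) w - 1 = (i : ℕ) := by
    intro x hx y hy hxy
    have h := hmono x hx y hy hxy
    have h2 := congrArg Fin.val h
    simpa using h2
  by_cases hi : (i : ℕ) + 1 < w
  · have hcard3 : u.card = 3 := by simpa [hi] using hcard
    obtain ⟨a, b, c, hab, hac, hbc, rfl⟩ := Finset.card_eq_three.mp hcard3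
    have dist_eq : ∀ x ∈ ({a, b, c} : Finset (Fin t)), ∀ y ∈ ({a, b, c} : Finset (Fin t)),
        x ≠ y → Nat.dist (F x) (F y) = (i : ℕ) + 1 := by
      intro x hx y hy hxy
      have d := hval x hx y hy hxy
      have h1 : Nat.dist (F x) (F y) ≠ 0 := fun h' => hne x y hxy (Nat.eq_of_dist_eq_zero h')
      rcases le_total (Nat.dist (F x) (F y)) w with hle | hle
      · rw [min_eq_left hle] at d; omega
      · rw [min_eq_right hle] at d; omega
    have e1 := dist_eq a (by simp) b (by simp) hab
    have e2 := dist_eq b (by simp) c (by simp) hbc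
    have e3 := dist_eq a (by simp) c (by simp) hac
    simp only [Nat.dist] at e1 e2 e3
    omega
  · have hcard4 : u.card = 4 := by simpa [hi] using hcard
    have hune : u.Nonempty := Finset.card_pos.mp (by omega)
    obtain ⟨a, ha⟩ := hune
    have hcard' : (u.erase a).card = 3 := by
      rw [Finset.card_erase_of_mem ha, hcard4]
    obtain ⟨b, c, d, hbc, hbd, hcd, habc⟩ := Finset.card_eq_three.mp hcard'
    have hb' : b ∈ u.erase a := by rw [habc]; simp
    have hc' : c ∈ u.erase a := by rw [habc]; simp
    have hd' : d ∈ u.erase a := by rw [habc]; simp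
    have hb := Finset.mem_of_mem_erase hb'
    have hc := Finset.mem_of_mem_erase hc'
    have hd := Finset.mem_of_mem_erase hd'
    have hba : b ≠ a := (Finset.mem_erase.mp hb').1
    have hca : c ≠ a := (Finset.mem_erase.mp hc').1
    have hda : d ≠ a := (Finset.mem_erase.mp hd').1
    have key : ∀ x ∈ u, ∀ y ∈ u, x ≠ y → w ≤ Nat.dist (F x) (F y) := by
      intro x hx y hy hxy
      have dd := hval x hx y hy hxy
      have h1 : Nat.dist (F x) (F y) ≠ 0 := fun h' => hne x y hxy (Nat.eq_of_dist_eq_zero h')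
      have hiw : (i : ℕ) < w := i.isLt
      rcases le_total (Nat.dist (F x) (F y)) w with hle | hle
      · rw [min_eq_left hle] at dd; omega
      · omega
    have k1 := key a ha b hb (Ne.symm hba)
    have k2 := key a ha c hc (Ne.symm hca)
    have k3 := key a ha d hd (Ne.symm hda)
    have k4 := key b hb c hc hbc
    have k5 := key b hb d hd hbd
    have k6 := key c hc d hd hcd
    have w1 := hwin a
    have w2 := hwin b
    have w3 := hwin c
    have w4 := hwin d
    simp only [Nat.dist] at k1 k2 k3 k4 k5 k6 w1 w2 w3 w4
    clear hval hmono hcard hR hne hwin key hcard4 hcard' habc hi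
    omega

/-- `s(G) < R(3, ..., 3, 4)` with `CCW(G) - 1` threes. -/
theorem stmt13 [Fintype V] (G : SimpleGraph V) (h : 1 ≤ CCW G) :
    starNum G <
      ramseyNumber (fun i : Fin (CCW G) => if (i : ℕ) + 1 < CCW G then 3 else 4) := by
  classical
  set n : Fin (CCW G) → ℕ := fun i => if (i : ℕ) + 1 < CCW G then 3 else 4 with hn
  obtain ⟨t0, ht0pos, ht0⟩ := sym2_ramsey (∑ i, n i) (CCW G) n le_rfl
  have hR0 : RamseyProp t0 n := by
    intro c
    obtain ⟨i, u, husub, hucard, humono⟩ := ht0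
      (fun p => c (p.map fun m => (⟨m % t0, Nat.mod_lt m ht0pos⟩ : Fin t0)))
      (Finset.range t0) (by simp)
    refine ⟨i, u.image (fun m => (⟨m % t0, Nat.mod_lt m ht0pos⟩ : Fin t0)), ?_, ?_⟩
    · rw [Finset.card_image_of_injOn, hucard]
      intro x hx y hy hxy
      have hx' := Finset.mem_range.mp (husub hx)
      have hy' := Finset.mem_range.mp (husub hy)
      have hv := congrArg Fin.val hxy
      simpa [Nat.mod_eq_of_lt hx', Nat.mod_eq_of_lt hy'] using hv
    · intro a ha b hb hab
      obtain ⟨a', ha', rfl⟩ := Finset.mem_image.mp ha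
      obtain ⟨b', hb', rfl⟩ := Finset.mem_image.mp hb
      have hne : a' ≠ b' := fun hh => hab (by rw [hh])
      have hm := humono a' ha' b' hb' hne
      simpa [Sym2.map_pair_eq] using hm
  have hge3 : ∀ t, RamseyProp t n → 3 ≤ t := by
    intro t hR
    obtain ⟨i, u, hucard, -⟩ := hR (fun _ => ⟨0, h⟩)
    have h1 : 3 ≤ n i := by
      rw [hn]; dsimp only; split <;> omega
    have h2 : u.card ≤ t := by
      simpa using Finset.card_le_univ u
    omega
  have key : ∀ t, RamseyProp t n → starNum G < t := by
    intro t hR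
    have h3t := hge3 t hR
    by_cases hcard : Fintype.card V ≤ 2
    · rw [starNum, if_pos hcard]; omega
    · rw [starNum, if_neg hcard]
      by_contra hcon
      push_neg at hcon
      have hVne : Nonempty V := by
        rw [← Fintype.card_pos_iff]; omega
      obtain ⟨r0⟩ := hVne
      have hKne : {k : ℕ | ∃ (r : V) (L : Finset V), r ∉ L ∧ Gᶜ.IsClique (L : Set V) ∧
          (∀ v ∈ L, G.Adj r v) ∧ L.card = k}.Nonempty :=
        ⟨0, r0, ∅, by simp, by simp, by simp, rfl⟩
      have hKbdd : BddAbove {k : ℕ | ∃ (r : V) (L : Finset V), r ∉ L ∧ Gᶜ.IsClique (L : Set V) ∧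
          (∀ v ∈ L, G.Adj r v) ∧ L.card = k} := by
        refine ⟨Fintype.card V, ?_⟩
        rintro k ⟨r, L, -, -, -, rfl⟩
        simpa using Finset.card_le_univ L
      obtain ⟨r, L, hrL, hLI, hadj, hLcard⟩ := Nat.sSup_mem hKne hKbdd
      -- obtain an optimal clique cover
      have hCne : {w : ℕ | ∃ f : V → ℕ, IsOrderedCliqueCover G f ∧ coverWidth G f = w}.Nonempty := by
        refine ⟨_, fun v => ((Fintype.equivFin V) v : ℕ), ?_, rfl⟩
        intro m x hx y hy hxy
        simp only [Set.mem_setOf_eq] at hx hy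
        exact absurd ((Fintype.equivFin V).injective (Fin.val_injective (hx.trans hy.symm))) hxy
      obtain ⟨f, hf, hfw⟩ : ∃ f : V → ℕ, IsOrderedCliqueCover G f ∧ coverWidth G f = CCW G :=
        Nat.sInf_mem hCne
      have hbdd : BddAbove {d : ℕ | ∃ x y, G.Adj x y ∧ d = Nat.dist (f x) (f y)} := by
        refine ⟨Finset.univ.sup f + Finset.univ.sup f, ?_⟩
        rintro d ⟨x, y, -, rfl⟩
        have h1 : f x ≤ Finset.univ.sup f := Finset.le_sup (Finset.mem_univ x)
        have h2 : f y ≤ Finset.univ.sup f := Finset.le_sup (Finset.mem_univ y)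
        simp only [Nat.dist]; omega
      have hbd : ∀ x y : V, G.Adj x y → Nat.dist (f x) (f y) ≤ CCW G := by
        intro x y hxy
        rw [← hfw]
        exact le_csSup hbdd ⟨x, y, hxy, rfl⟩
      have htL : t ≤ L.card := by rw [hLcard]; exact hcon
      set g : Fin t → V := fun x => (L.equivFin.symm (Fin.castLE htL x) : V) with hg
      have hgmem : ∀ x, g x ∈ L := fun x => (L.equivFin.symm (Fin.castLE htL x)).2
      have hginj : ∀ x y : Fin t, x ≠ y → g x ≠ g y := by
        intro x y hxy hgg
        exact hxy (Fin.castLE_injective htL (L.equivFin.symm.injective (Subtype.ext hgg)))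
      have hnadj : ∀ x y : Fin t, x ≠ y → ¬ G.Adj (g x) (g y) := by
        intro x y hxy
        have hcadj : Gᶜ.Adj (g x) (g y) :=
          hLI (Finset.mem_coe.mpr (hgmem x)) (Finset.mem_coe.mpr (hgmem y)) (hginj x y hxy)
        simp only [SimpleGraph.compl_adj] at hcadj
        exact hcadj.2
      have hFne : ∀ x y : Fin t, x ≠ y → f (g x) ≠ f (g y) := by
        intro x y hxy heq
        have hcl := hf (f (g x))
        have hadj' : G.Adj (g x) (g y) :=
          hcl (show g x ∈ {v | f v = f (g x)} from rfl)
            (show g y ∈ {v | f v = f (g x)} from heq.symm) (hginj x y hxy)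
        exact hnadj x y hxy hadj'
      have hwin : ∀ x : Fin t, Nat.dist (f r) (f (g x)) ≤ CCW G :=
        fun x => hbd r (g x) (hadj (g x) (hgmem x))
      exact no_ramsey h (fun x => f (g x)) (f r) hwin hFne hR
  have hmem : RamseyProp (sInf {t | RamseyProp t n}) n :=
    Nat.sInf_mem (⟨t0, hR0⟩ : {t : ℕ | RamseyProp t n}.Nonempty)
  exact key _ hmem
end

section
/- Let G be an incomparability graph with transitive orientation D of its complement, and let C = {C_0, ..., C_k} be the greedy (level-by-level sources) clique cover of G. Then W(C) ≤ s(G) − 1, where s(G) is the maximum number of leaves of an induced star in G. -/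
open SimpleGraph

variable {V : Type*}

section Aux

variable [Fintype V] (D : V → V → Prop) (lvl : V → ℕ)
  (hlvl : ∀ v, lvl v = sSup {k : ℕ | ∃ u, D u v ∧ k = lvl u + 1})

include hlvl
set_option linter.unusedSectionVars false in

lemma bddS (v : V) : BddAbove {k : ℕ | ∃ u, D u v ∧ k = lvl u + 1} := by
  refine BddAbove.mono ?_ (Set.finite_range (fun u => lvl u + 1)).bddAbove
  rintro k ⟨u, _, rfl⟩; exact ⟨u, rfl⟩

lemma lvl_lt (u v : V) (h : D u v) : lvl u + 1 ≤ lvl v := by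
  rw [hlvl v]
  exact le_csSup (bddS D lvl hlvl v) ⟨u, h, rfl⟩

lemma pred_exists (v : V) (m : ℕ) (h : lvl v = m + 1) :
    ∃ u, D u v ∧ lvl u = m := by
  have hne : {k : ℕ | ∃ u, D u v ∧ k = lvl u + 1}.Nonempty := by
    by_contra hne
    rw [Set.not_nonempty_iff_eq_empty] at hne
    rw [hlvl v, hne] at h; simp at h
  have := Nat.sSup_mem hne (bddS D lvl hlvl v)
  rw [← hlvl v, h] at this
  obtain ⟨u, hu, he⟩ := this
  exact ⟨u, hu, by omega⟩

lemma chain_exists : ∀ (n : ℕ) (v : V), lvl v = n →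
    ∃ c : ℕ → V, c n = v ∧ ∀ i, i < n → lvl (c i) = i ∧ D (c i) (c (i + 1)) := by
  intro n
  induction n with
  | zero => intro v _; exact ⟨fun _ => v, rfl, fun i hi => absurd hi (Nat.not_lt_zero i)⟩
  | succ m ih =>
    intro v hv
    obtain ⟨u, huv, hu⟩ := pred_exists D lvl hlvl v m hv
    obtain ⟨c, hc, hchain⟩ := ih u hu
    refine ⟨Function.update c (m + 1) v, Function.update_self _ _ _, fun i hi => ?_⟩
    rcases Nat.lt_or_ge i m with him | him
    · have h1' : Function.update c (m + 1) v i = c i :=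
        Function.update_of_ne (by omega) _ _
      have h2' : Function.update c (m + 1) v (i + 1) = c (i + 1) :=
        Function.update_of_ne (by omega) _ _
      rw [h1', h2']; exact hchain i him
    · have hieq : i = m := by omega
      subst hieq
      have h1' : Function.update c (i + 1) v i = c i :=
        Function.update_of_ne (by omega) _ _
      rw [h1', Function.update_self, hc]
      exact ⟨hu, huv⟩

lemma chainD {n : ℕ} {c : ℕ → V}
    (hchain : ∀ i, i < n → lvl (c i) = i ∧ D (c i) (c (i + 1)))
    (h3 : Transitive D) :
    ∀ j, j ≤ n → ∀ i, i < j → D (c i) (c j) := by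
  intro j
  induction j with
  | zero => intro _ i hi; omega
  | succ m ih =>
    intro hm i hi
    rcases Nat.lt_or_ge i m with him | him
    · exact h3 (ih (by omega) i him) (hchain m (by omega)).2
    · have : i = m := by omega
      subst this
      exact (hchain i (by omega)).2

omit hlvl in
lemma not_adj_both {G : SimpleGraph V}
    (h1 : ∀ x y, Gᶜ.Adj x y ↔ D x y ∨ D y x) {x y : V} (h : G.Adj x y) :
    ¬ D x y ∧ ¬ D y x := by
  have : ¬ Gᶜ.Adj x y := by rw [compl_adj]; push_neg; intro _; exact h
  rw [h1] at this; tauto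

lemma key (G : SimpleGraph V)
    (h1 : ∀ x y, Gᶜ.Adj x y ↔ D x y ∨ D y x)
    (h2 : ∀ x y, D x y → ¬ D y x) (h3 : Transitive D)
    {x y : V} (hxy : G.Adj x y) (hle : lvl y ≤ lvl x) :
    lvl x - lvl y ≤ starNum G - 1 := by
  classical
  set m := lvl x with hm
  set l := lvl y with hl
  rcases Nat.eq_or_lt_of_le hle with heq | hlt
  · simp [← heq]
  obtain ⟨c, hcx, hchain⟩ := chain_exists D lvl hlvl m x rfl
  have hlvlc : ∀ i, i ≤ m → lvl (c i) = i := by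
    intro i hi
    rcases Nat.lt_or_ge i m with h | h
    · exact (hchain i h).1
    · have : i = m := by omega
      subst this; rw [hcx]
  have hD : ∀ j, j ≤ m → ∀ i, i < j → D (c i) (c j) :=
    chainD D lvl hlvl hchain h3
  -- each c i (l ≤ i ≤ m) is adjacent to y
  have hnDyx := not_adj_both D h1 hxy
  have hadj : ∀ i, l ≤ i → i ≤ m → G.Adj y (c i) := by
    intro i hli him
    have hciy : ¬ D (c i) y := by
      intro h
      have := lvl_lt D lvl hlvl _ _ h
      rw [hlvlc i him] at this; omega
    have hyci : ¬ D y (c i) := by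
      intro h
      rcases Nat.lt_or_ge i m with hlt' | hge
      · exact hnDyx.2 (h3 h (by rw [← hcx]; exact hD m le_rfl i hlt'))
      · have : i = m := by omega
        subst this; rw [hcx] at h; exact hnDyx.2 h
    have hne : y ≠ c i := by
      intro h
      rcases Nat.lt_or_ge i m with hlt' | hge
      · exact hnDyx.2 (by rw [h, ← hcx]; exact hD m le_rfl i hlt')
      · have : i = m := by omega
        subst this; rw [hcx] at h; exact hxy.ne h.symm
    by_contra hna
    have : Gᶜ.Adj y (c i) := by rw [compl_adj]; exact ⟨hne, hna⟩
    rw [h1] at this; tauto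
  set L : Finset V := (Finset.Icc l m).image c with hL
  have hcard : L.card = m - l + 1 := by
    rw [hL, Finset.card_image_of_injOn, Nat.card_Icc]
    · omega
    · intro a ha b hb hab
      simp only [Finset.coe_Icc, Set.mem_Icc] at ha hb
      have := hlvlc a ha.2
      rw [hab, hlvlc b hb.2] at this; omega
  have hmemL : ∀ v ∈ L, ∃ i, l ≤ i ∧ i ≤ m ∧ v = c i := by
    intro v hv
    simp only [hL, Finset.mem_image, Finset.mem_Icc] at hv
    obtain ⟨i, ⟨h1', h2'⟩, h3'⟩ := hv
    exact ⟨i, h1', h2', h3'.symm⟩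
  have hyL : y ∉ L := by
    intro hy
    obtain ⟨i, hli, him, hyi⟩ := hmemL y hy
    exact (hadj i hli him).ne hyi
  have hclique : Gᶜ.IsClique (L : Set V) := by
    intro a ha b hb hab
    obtain ⟨i, hli, him, rfl⟩ := hmemL a ha
    obtain ⟨j, hlj, hjm, rfl⟩ := hmemL b hb
    have hij : i ≠ j := by rintro rfl; exact hab rfl
    rcases Nat.lt_or_ge i j with h | h
    · rw [h1]; exact Or.inl (hD j hjm i h)
    · rw [h1]; exact Or.inr (hD i him j (by omega))
  -- card V ≥ 3
  have hcardV : ¬ Fintype.card V ≤ 2 := by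
    intro hc
    have hsub : insert y L ⊆ Finset.univ := Finset.subset_univ _
    have := Finset.card_le_card hsub
    rw [Finset.card_insert_of_notMem hyL, hcard, Finset.card_univ] at this
    omega
  have hmem : m - l + 1 ∈ {k : ℕ | ∃ (r : V) (L : Finset V), r ∉ L ∧
      Gᶜ.IsClique (L : Set V) ∧ (∀ v ∈ L, G.Adj r v) ∧ L.card = k} :=
    ⟨y, L, hyL, hclique, fun v hv => by
      obtain ⟨i, hli, him, rfl⟩ := hmemL v hv; exact hadj i hli him, hcard⟩
  have hbdd : BddAbove {k : ℕ | ∃ (r : V) (L : Finset V), r ∉ L ∧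
      Gᶜ.IsClique (L : Set V) ∧ (∀ v ∈ L, G.Adj r v) ∧ L.card = k} := by
    refine ⟨Fintype.card V, ?_⟩
    rintro k ⟨r, L', _, _, _, rfl⟩
    exact Finset.card_le_univ L'
  have : m - l + 1 ≤ starNum G := by
    rw [starNum, if_neg hcardV]
    exact le_csSup hbdd hmem
  omega

end Aux


/-- the greedy clique cover of an incomparability graph has
width at most `s(G) - 1`. -/
theorem stmt15 [Fintype V] (G : SimpleGraph V) (D : V → V → Prop)
    (h1 : ∀ x y, Gᶜ.Adj x y ↔ D x y ∨ D y x)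
    (h2 : ∀ x y, D x y → ¬ D y x) (h3 : Transitive D)
    (lvl : V → ℕ)
    (hlvl : ∀ v, lvl v = sSup {k : ℕ | ∃ u, D u v ∧ k = lvl u + 1}) :
    coverWidth G lvl ≤ starNum G - 1 := by
  rw [coverWidth]
  apply csSup_le'
  rintro d ⟨a, b, hab, rfl⟩
  rcases le_total (lvl b) (lvl a) with h | h
  · rw [Nat.dist_eq_sub_of_le_right h]
    exact key D lvl hlvl G h1 h2 h3 hab h
  · rw [Nat.dist_eq_sub_of_le h]
    exact key D lvl hlvl G h1 h2 h3 hab.symm h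
end

section
/- If G is an incomparability graph, then ⌈s(G)/2⌉ − 1 ≤ CCW(G) ≤ s(G) − 1, where s(G) is the maximum number of leaves of an induced star in G. -/
open SimpleGraph

variable {V : Type*}

/-- Lengths of strict chains (w.r.t. `D`) ending at `v`. -/
def chainSet (D : V → V → Prop) (v : V) : Set ℕ :=
  {n | ∃ c : ℕ → V, c n = v ∧ ∀ i j, i < j → j ≤ n → D (c i) (c j)}

/-- Height of `v`: length of the longest `D`-chain ending at `v`. -/
noncomputable def ht (D : V → V → Prop) (v : V) : ℕ := sSup (chainSet D v)

lemma zero_mem_chainSet (D : V → V → Prop) (v : V) : 0 ∈ chainSet D v :=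
  ⟨fun _ => v, rfl, fun _ _ hij hj => ((by omega : False).elim)⟩

lemma chainSet_bddAbove [Fintype V] {D : V → V → Prop} (hirr : ∀ x, ¬ D x x)
    (v : V) : BddAbove (chainSet D v) := by
  classical
  refine ⟨Fintype.card V, fun n hn => ?_⟩
  obtain ⟨c, hcv, hc⟩ := hn
  have hinj : Set.InjOn c (Finset.range (n+1) : Finset ℕ) := by
    intro i hi j hj hij
    simp only [Finset.coe_range, Set.mem_Iio] at hi hj
    by_contra hne
    rcases Nat.lt_or_ge i j with h | h
    · have := hc i j h (by omega); rw [hij] at this; exact hirr _ this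
    · have := hc j i (by omega) (by omega); rw [hij] at this; exact hirr _ this
  have := Finset.card_le_univ (Finset.image c (Finset.range (n+1)))
  rw [Finset.card_image_of_injOn hinj, Finset.card_range] at this
  omega

lemma ht_mem_chainSet [Fintype V] {D : V → V → Prop} (hirr : ∀ x, ¬ D x x)
    (v : V) : ht D v ∈ chainSet D v :=
  Nat.sSup_mem ⟨0, zero_mem_chainSet D v⟩ (chainSet_bddAbove hirr v)

lemma ht_lt_of_D [Fintype V] {D : V → V → Prop} (hirr : ∀ x, ¬ D x x)
    (htr : Transitive D) {u v : V} (h : D u v) : ht D u < ht D v := by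
  obtain ⟨c, hcu, hc⟩ := ht_mem_chainSet hirr u
  set n := ht D u with hn
  have hmem : n + 1 ∈ chainSet D v := by
    refine ⟨fun i => if i = n + 1 then v else c i, by simp, ?_⟩
    intro i j hij hj
    rcases Nat.lt_or_ge j (n+1) with hj' | hj'
    · simp only [if_neg (by omega : i ≠ n+1), if_neg (by omega : j ≠ n+1)]
      exact hc i j hij (by omega)
    · have hjeq : j = n + 1 := by omega
      simp only [hjeq, if_pos rfl, if_neg (by omega : i ≠ n+1)]
      rcases Nat.lt_or_ge i n with hi | hi
      · exact htr (hc i n hi le_rfl) (hcu ▸ h)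
      · have : i = n := by omega
        rw [this, hcu]; exact h
  exact Nat.lt_of_succ_le (le_csSup (chainSet_bddAbove hirr v) hmem)

lemma le_ht_of_chain [Fintype V] {D : V → V → Prop} (hirr : ∀ x, ¬ D x x)
    {c : ℕ → V} {n : ℕ} (hc : ∀ i j, i < j → j ≤ n → D (c i) (c j))
    {i : ℕ} (hi : i ≤ n) : i ≤ ht D (c i) :=
  le_csSup (chainSet_bddAbove hirr (c i))
    ⟨c, rfl, fun i' j' h h' => hc i' j' h (h'.trans hi)⟩

/-- for an incomparability graph `G`,
`⌈s(G)/2⌉ - 1 ≤ CCW(G) ≤ s(G) - 1`. -/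
theorem stmt16 [Fintype V] (G : SimpleGraph V) (D : V → V → Prop)
    (h1 : ∀ x y, Gᶜ.Adj x y ↔ D x y ∨ D y x)
    (h2 : ∀ x y, D x y → ¬ D y x) (h3 : Transitive D) :
    (starNum G + 1) / 2 - 1 ≤ CCW G ∧ CCW G ≤ starNum G - 1 := by
  classical
  have hirr : ∀ x, ¬ D x x := fun x hx => h2 x x hx hx
  have hadj_iff : ∀ x y : V, x ≠ y → (G.Adj x y ↔ ¬ D x y ∧ ¬ D y x) := by
    intro x y hne
    constructor
    · intro h
      have hc : ¬ Gᶜ.Adj x y := fun hc => hc.2 h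
      rw [h1] at hc; tauto
    · intro h
      by_contra hA
      have hc : Gᶜ.Adj x y := (G.compl_adj x y).2 ⟨hne, hA⟩
      rw [h1] at hc; tauto
  have hSne : {w : ℕ | ∃ f : V → ℕ, IsOrderedCliqueCover G f ∧
      coverWidth G f = w}.Nonempty := by
    obtain ⟨f, hf⟩ := exists_injective_nat V
    exact ⟨coverWidth G f, f,
      fun n x hx y hy hxy => (hxy (hf (hx.trans hy.symm))).elim, rfl⟩
  have hCCW : ∃ f, IsOrderedCliqueCover G f ∧ coverWidth G f = CCW G :=
    Nat.sInf_mem hSne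
  have hdist : ∀ f : V → ℕ, ∀ x y, G.Adj x y →
      Nat.dist (f x) (f y) ≤ coverWidth G f := by
    intro f x y hxy
    apply le_csSup
    · apply Set.Finite.bddAbove
      apply Set.Finite.subset
        (Set.finite_range (fun p : V × V => Nat.dist (f p.1) (f p.2)))
      rintro d ⟨x, y, _, rfl⟩; exact ⟨(x, y), rfl⟩
    · exact ⟨x, y, hxy, rfl⟩
  -- Lower bound
  have hlow : starNum G ≤ 2 * CCW G + 1 := by
    rw [starNum]
    split_ifs with hcard
    · omega
    · obtain ⟨f, hfcov, hfw⟩ := hCCW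
      apply csSup_le'
      rintro k ⟨r, L, hrL, hLind, hadj, rfl⟩
      have hmaps : ∀ v ∈ L, f v ∈ Finset.Icc (f r - CCW G) (f r + CCW G) := by
        intro v hv
        have hd := hdist f r v (hadj v hv)
        rw [hfw] at hd
        simp only [Finset.mem_Icc]
        simp only [Nat.dist] at hd
        omega
      have hinj : Set.InjOn f (L : Set V) := by
        intro u hu v hv huv
        by_contra hne
        have hA : G.Adj u v := hfcov (f u) rfl huv.symm hne
        exact ((G.compl_adj u v).1 (hLind hu hv hne)).2 hA
      have := Finset.card_le_card_of_injOn f hmaps hinj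
      rw [Nat.card_Icc] at this
      omega
  -- Upper bound
  have key : ∀ x y, G.Adj x y → ht D y ≤ ht D x + (starNum G - 1) := by
    intro x y hxy
    rcases le_or_gt (ht D y) (ht D x) with h | h
    · omega
    obtain ⟨c, hcy, hc⟩ := ht_mem_chainSet hirr y
    set a := ht D x with ha
    set b := ht D y with hb
    have hDxy : ¬ D x y ∧ ¬ D y x := (hadj_iff x y hxy.ne).1 hxy
    have hfacts : ∀ i, a ≤ i → i ≤ b → G.Adj x (c i) ∧ c i ≠ x := by
      intro i hai hib
      have hiht : i ≤ ht D (c i) := le_ht_of_chain hirr hc hib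
      have hnDcx : ¬ D (c i) x := fun hd => by
        have := ht_lt_of_D hirr h3 hd; omega
      have hnDxc : ¬ D x (c i) := by
        intro hd
        rcases Nat.lt_or_ge i b with hib' | hib'
        · have h5 := hc i b hib' le_rfl
          rw [hcy] at h5
          exact hDxy.1 (h3 hd h5)
        · have hieq : i = b := by omega
          rw [hieq, hcy] at hd
          exact hDxy.1 hd
      have hne : c i ≠ x := by
        intro he
        rcases Nat.lt_or_ge i b with hib' | hib'
        · have h5 := hc i b hib' le_rfl
          rw [hcy, he] at h5
          exact hDxy.1 h5
        · have hieq : i = b := by omega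
          rw [hieq, hcy] at he
          exact hxy.ne he.symm
      exact ⟨(hadj_iff x (c i) (Ne.symm hne)).2 ⟨hnDxc, hnDcx⟩, hne⟩
    set L := Finset.image c (Finset.Icc a b) with hL
    have hinj : Set.InjOn c (Finset.Icc a b : Set ℕ) := by
      intro i hi j hj hij
      simp only [Finset.coe_Icc, Set.mem_Icc] at hi hj
      by_contra hne
      rcases Nat.lt_or_ge i j with hlt | hge
      · have := hc i j hlt hj.2; rw [hij] at this; exact hirr _ this
      · have := hc j i (by omega) hi.2; rw [hij] at this; exact hirr _ this
    have hcardL : L.card = b - a + 1 := by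
      rw [hL, Finset.card_image_of_injOn hinj, Nat.card_Icc]; omega
    have hxL : x ∉ L := by
      intro hx
      simp only [hL, Finset.mem_image, Finset.mem_Icc] at hx
      obtain ⟨i, ⟨hai, hib⟩, he⟩ := hx
      exact (hfacts i hai hib).2 he
    have hLclique : Gᶜ.IsClique (L : Set V) := by
      intro u hu v hv huv
      simp only [hL, Finset.coe_image, Set.mem_image, Finset.coe_Icc,
        Set.mem_Icc] at hu hv
      obtain ⟨i, ⟨hai, hib⟩, rfl⟩ := hu
      obtain ⟨j, ⟨haj, hjb⟩, rfl⟩ := hv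
      have hij : i ≠ j := fun he => huv (by rw [he])
      rcases Nat.lt_or_ge i j with hlt | hge
      · exact (h1 _ _).2 (Or.inl (hc i j hlt hjb))
      · exact (h1 _ _).2 (Or.inr (hc j i (by omega) hib))
    have hLadj : ∀ v ∈ L, G.Adj x v := by
      intro v hv
      simp only [hL, Finset.mem_image, Finset.mem_Icc] at hv
      obtain ⟨i, ⟨hai, hib⟩, rfl⟩ := hv
      exact (hfacts i hai hib).1
    rcases le_or_gt (Fintype.card V) 2 with hcard | hcard
    · exfalso
      have := Finset.card_le_univ (insert x L)
      rw [Finset.card_insert_of_notMem hxL, hcardL] at this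
      omega
    · have hmem : b - a + 1 ∈ {k : ℕ | ∃ (r : V) (L : Finset V), r ∉ L ∧
          Gᶜ.IsClique (L : Set V) ∧ (∀ v ∈ L, G.Adj r v) ∧ L.card = k} :=
        ⟨x, L, hxL, hLclique, hLadj, hcardL⟩
      have hbdd : BddAbove {k : ℕ | ∃ (r : V) (L : Finset V), r ∉ L ∧
          Gᶜ.IsClique (L : Set V) ∧ (∀ v ∈ L, G.Adj r v) ∧ L.card = k} := by
        refine ⟨Fintype.card V, ?_⟩
        rintro k ⟨r, L', _, _, _, rfl⟩
        exact Finset.card_le_univ L'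
      have hle := le_csSup hbdd hmem
      rw [starNum, if_neg (by omega)]
      omega
  have hcov : IsOrderedCliqueCover G (ht D) := by
    intro n u hu v hv hne
    simp only [Set.mem_setOf_eq] at hu hv
    by_contra hA
    have hc : Gᶜ.Adj u v := (G.compl_adj u v).2 ⟨hne, hA⟩
    rw [h1] at hc
    rcases hc with hd | hd
    · have := ht_lt_of_D hirr h3 hd; rw [hu, hv] at this; omega
    · have := ht_lt_of_D hirr h3 hd; rw [hu, hv] at this; omega
  have hwidth : coverWidth G (ht D) ≤ starNum G - 1 := by
    unfold coverWidth
    apply csSup_le'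
    rintro d ⟨x, y, hxy, rfl⟩
    have hk1 := key x y hxy
    have hk2 := key y x hxy.symm
    simp only [Nat.dist]
    omega
  have hupp : CCW G ≤ starNum G - 1 :=
    le_trans (Nat.sInf_le ⟨ht D, hcov, rfl⟩) hwidth
  exact ⟨by omega, hupp⟩
end

section
/- If G is an incomparability graph, then Udim(G) ≤ s(G) − 1 (assuming G is connected and not complete), where s(G) is the maximum number of leaves of an induced star in G. -/
/-!
Read `G` as the incomparability graph of the finite poset `(V, D)` and label every vertex by its
height. If `x` and `y` are adjacent and `height y ≥ height x + s`, then a chain of length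
`height y` ending at `y` has at least `s + 1` members of height `≥ height x`; none of them is
comparable with `x`, so they are the leaves of an induced star centred at `x`, which is
impossible. Hence the heights of adjacent vertices differ by less than `s`, while comparable
vertices have distinct heights. With `w = s - 1`, for each shift `i < w` the blocks
`⌊(height + i) / w⌋` are the cliques of a width-one ordered clique cover of a supergraph of `G`,
and any two distinct heights fall into different blocks for some shift, so these `w` graphs
intersect to `G`.
-/

open SimpleGraph

variable {V : Type*}

/-- `Udim(G)`: the smallest `d` such that `G` is the intersection of `d`
unit incomparability graphs (graphs `H` with `CCW(H) ≤ 1`) on `V(G)`. -/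
noncomputable def Udim (G : SimpleGraph V) : ℕ :=
  sInf {d : ℕ | ∃ H : Fin d → SimpleGraph V, (∀ i, CCW (H i) ≤ 1) ∧
    ∀ x y, G.Adj x y ↔ ∀ i, (H i).Adj x y}

namespace Nat

lemma dist_div_le_one {a b w : ℕ} (h : Nat.dist a b ≤ w) : Nat.dist (a / w) (b / w) ≤ 1 := by
  rcases Nat.eq_zero_or_pos w with rfl | hw
  · simp
  have div_le_succ : ∀ {a b : ℕ}, b ≤ a + w → b / w ≤ a / w + 1 := fun hb =>
    (Nat.div_le_div_right hb).trans (Nat.add_div_right _ hw).le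
  unfold Nat.dist at *
  have := div_le_succ (a := a) (b := b) (by omega)
  have := div_le_succ (a := b) (b := a) (by omega)
  omega

lemma exists_add_div_lt_add_div {a b w : ℕ} (hw : 0 < w) (hab : a < b) :
    ∃ i < w, (a + i) / w < (b + i) / w := by
  have hmod := Nat.mod_lt a hw
  have hdiv := Nat.div_add_mod' a w
  -- this shift moves `a` to the last position of its block of length `w`
  refine ⟨w - 1 - a % w, by omega, ?_⟩
  calc (a + (w - 1 - a % w)) / w < a / w + 1 :=
        (Nat.div_lt_iff_lt_mul hw).2 (by rw [add_mul]; omega)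
    _ ≤ (b + (w - 1 - a % w)) / w := (Nat.le_div_iff_mul_le hw).2 (by rw [add_mul]; omega)

end Nat

namespace SimpleGraph

variable {G : SimpleGraph V}

def levelGraph (g : V → ℕ) : SimpleGraph V :=
  SimpleGraph.fromRel fun a b => g a = g b

lemma isOrderedCliqueCover_levelGraph (g : V → ℕ) : IsOrderedCliqueCover (levelGraph g) g :=
  fun _ _ ha _ hb hne => (fromRel_adj _ _ _).2 ⟨hne, Or.inl (ha.trans hb.symm)⟩

lemma IsOrderedCliqueCover.mono {H : SimpleGraph V} {f : V → ℕ} (hf : IsOrderedCliqueCover G f)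
    (hGH : G ≤ H) : IsOrderedCliqueCover H f :=
  fun n => (hf n).mono hGH

lemma coverWidth_le {f : V → ℕ} {w : ℕ} (h : ∀ x y, G.Adj x y → Nat.dist (f x) (f y) ≤ w) :
    coverWidth G f ≤ w :=
  csSup_le' <| by rintro _ ⟨x, y, hxy, rfl⟩; exact h x y hxy

lemma CCW_le_coverWidth {f : V → ℕ} (hf : IsOrderedCliqueCover G f) : CCW G ≤ coverWidth G f :=
  Nat.sInf_le ⟨f, hf, rfl⟩

lemma CCW_sup_levelGraph_le_one {g : V → ℕ} (hg : ∀ x y, G.Adj x y → Nat.dist (g x) (g y) ≤ 1) :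
    CCW (G ⊔ levelGraph g) ≤ 1 := by
  refine (CCW_le_coverWidth ((isOrderedCliqueCover_levelGraph g).mono le_sup_right)).trans
    (coverWidth_le fun x y hxy => ?_)
  rcases hxy with hxy | hxy
  · exact hg x y hxy
  · rcases ((fromRel_adj _ _ _).1 hxy).2 with h | h <;> simp [h]

lemma Udim_le_of_dist_le {f : V → ℕ} {w : ℕ} (hw : 0 < w)
    (hadj : ∀ x y, G.Adj x y → Nat.dist (f x) (f y) ≤ w)
    (hsep : ∀ x y, x ≠ y → ¬G.Adj x y → f x ≠ f y) : Udim G ≤ w := by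
  let H : Fin w → SimpleGraph V := fun i => G ⊔ levelGraph fun v => (f v + i) / w
  refine Nat.sInf_le ⟨H, fun i => CCW_sup_levelGraph_le_one fun x y hxy => ?_, fun x y => ?_⟩
  · exact Nat.dist_div_le_one ((Nat.dist_add_add_right _ _ _).trans_le (hadj x y hxy))
  refine ⟨fun hxy i => Or.inl hxy, fun hH => by_contra fun hxy => ?_⟩
  have hne : x ≠ y := (hH ⟨0, hw⟩).ne
  have hlevel : ∀ i : Fin w, (f x + i) / w = (f y + i) / w := fun i =>
    (((fromRel_adj _ _ _).1 ((hH i).resolve_left hxy)).2.elim id Eq.symm)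
  rcases (hsep x y hne hxy).lt_or_gt with hlt | hlt
  · obtain ⟨i, hi, hsep⟩ := Nat.exists_add_div_lt_add_div hw hlt
    exact hsep.ne (hlevel ⟨i, hi⟩)
  · obtain ⟨i, hi, hsep⟩ := Nat.exists_add_div_lt_add_div hw hlt
    exact hsep.ne' (hlevel ⟨i, hi⟩)

def IsInducedStar (G : SimpleGraph V) (r : V) (L : Finset V) : Prop :=
  Gᶜ.IsClique (L : Set V) ∧ ∀ v ∈ L, G.Adj r v

lemma IsInducedStar.center_notMem {r : V} {L : Finset V} (h : G.IsInducedStar r L) : r ∉ L :=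
  fun hr => G.loopless.irrefl r (h.2 r hr)

lemma IsInducedStar.card_le_starNum [Fintype V] {r : V} {L : Finset V}
    (h : G.IsInducedStar r L) : L.card ≤ starNum G := by
  unfold starNum
  split_ifs with hV
  · have := Finset.card_lt_univ_of_notMem h.center_notMem
    omega
  · refine le_csSup ⟨Fintype.card V, ?_⟩ ⟨r, L, h.center_notMem, h.1, h.2, rfl⟩
    rintro _ ⟨_, L', -, -, -, rfl⟩
    exact L'.card_le_univ

lemma Connected.two_le_starNum [Fintype V] (hc : G.Connected) (hnc : G ≠ ⊤) : 2 ≤ starNum G := by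
  classical
  obtain ⟨u, v, huv, hnuv⟩ := ne_top_iff_exists_not_adj.1 hnc
  obtain ⟨p, hp⟩ := hc.exists_walk_length_eq_dist u v
  obtain ⟨x, r, y, hxr, hry, hxy, hne⟩ :=
    p.exists_adj_adj_not_adj_ne hp (hc.one_lt_dist_of_ne_of_not_adj huv hnuv)
  have hstar : G.IsInducedStar r {x, y} := by
    refine ⟨?_, by simpa using ⟨hxr.symm, hry⟩⟩
    rw [Finset.coe_pair]
    exact isClique_pair.2 fun _ => (compl_adj G x y).2 ⟨hne, hxy⟩
  simpa [Finset.card_pair hne] using hstar.card_le_starNum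

end SimpleGraph

namespace Order

variable {α : Type*} [Preorder α] [Finite α]

lemma height_ne_top_of_finite (a : α) : height a ≠ ⊤ := by
  cases nonempty_fintype α
  refine ne_top_of_le_ne_top (ENat.natCast_ne_top (Fintype.card α)) (height_le fun p _ => ?_)
  exact_mod_cast p.length_lt_card.le

noncomputable def natHeight (a : α) : ℕ := (height a).toNat

lemma natCast_natHeight (a : α) : (natHeight a : ℕ∞) = height a :=
  ENat.natCast_toNat (height_ne_top_of_finite a)

lemma natHeight_strictMono : StrictMono (natHeight : α → ℕ) := fun a b hab => by
  have := height_strictMono hab (height_ne_top_of_finite a).lt_top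
  rwa [← natCast_natHeight, ← natCast_natHeight, Nat.cast_lt] at this

lemma exists_series_natHeight (a : α) :
    ∃ p : LTSeries α, p.last = a ∧ p.length = natHeight a :=
  exists_series_of_height_eq_coe a (natCast_natHeight a).symm

lemma index_le_natHeight (p : LTSeries α) (i : Fin (p.length + 1)) :
    (i : ℕ) ≤ natHeight (p i) := by
  have := index_le_height p i
  rwa [← natCast_natHeight, Nat.cast_le] at this

end Order

namespace SimpleGraph

variable {α : Type*} [PartialOrder α] {G : SimpleGraph α}

def IsIncomparabilityGraph (G : SimpleGraph α) : Prop :=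
  ∀ x y, Gᶜ.Adj x y ↔ x < y ∨ y < x

namespace IsIncomparabilityGraph

open Order

lemma adj_iff (hG : G.IsIncomparabilityGraph) {x y : α} : G.Adj x y ↔ ¬x ≤ y ∧ ¬y ≤ x := by
  rw [← compl_compl G, compl_adj, hG, le_iff_lt_or_eq, le_iff_lt_or_eq]
  grind

lemma isClique_compl_range (hG : G.IsIncomparabilityGraph) (p : LTSeries α) :
    Gᶜ.IsClique (Set.range p) := by
  rintro _ ⟨i, rfl⟩ _ ⟨j, rfl⟩ hij
  exact (hG _ _).2 ((ne_of_apply_ne p hij).lt_or_gt.imp (p.strictMono ·) (p.strictMono ·))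

variable [Finite α]

lemma natHeight_lt_add_of_adj (hG : G.IsIncomparabilityGraph) {k : ℕ}
    (hk : ∀ r L, G.IsInducedStar r L → L.card ≤ k) {x y : α} (hxy : G.Adj x y) :
    natHeight y < natHeight x + k := by
  classical
  by_contra! hle
  obtain ⟨p, rfl, hp⟩ := exists_series_natHeight y
  let j : Fin (p.length + 1) := ⟨natHeight x, by omega⟩
  let L := (Finset.Ici j).map ⟨p, p.strictMono.injective⟩
  have hL : G.IsInducedStar x L := by
    refine ⟨(hG.isClique_compl_range p).subset (by simp [L]), ?_⟩
    simp only [L, Finset.mem_map, Finset.mem_Ici, Function.Embedding.coeFn_mk]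
    rintro _ ⟨i, hji, rfl⟩
    have hxy' := hG.adj_iff.1 hxy
    have hpi : p i ≤ p.last := p.monotone (Fin.le_last i)
    refine hG.adj_iff.2 ⟨fun h => hxy'.1 (h.trans hpi), fun h => ?_⟩
    rcases h.lt_or_eq with h | rfl
    · have := index_le_natHeight p i
      have := natHeight_strictMono h
      simp only [j, Fin.le_def] at hji
      omega
    · exact hxy'.1 hpi
  have := hk x L hL
  simp only [L, Finset.card_map, Fin.card_Ici, j] at this
  omega

lemma dist_natHeight_lt_of_adj (hG : G.IsIncomparabilityGraph) {k : ℕ}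
    (hk : ∀ r L, G.IsInducedStar r L → L.card ≤ k) {x y : α} (hxy : G.Adj x y) :
    Nat.dist (natHeight x) (natHeight y) < k := by
  have := hG.natHeight_lt_add_of_adj hk hxy
  have := hG.natHeight_lt_add_of_adj hk hxy.symm
  unfold Nat.dist
  omega

lemma natHeight_ne_of_not_adj (hG : G.IsIncomparabilityGraph) {x y : α} (hne : x ≠ y)
    (hxy : ¬G.Adj x y) : natHeight x ≠ natHeight y := by
  rcases (hG x y).1 ((compl_adj G x y).2 ⟨hne, hxy⟩) with h | h
  · exact (natHeight_strictMono h).ne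
  · exact (natHeight_strictMono h).ne'

end IsIncomparabilityGraph

end SimpleGraph

/-- for a connected, non-complete incomparability graph `G`,
`Udim(G) ≤ s(G) - 1`. -/
theorem stmt17 [Fintype V] (G : SimpleGraph V) (D : V → V → Prop)
    (h1 : ∀ x y, Gᶜ.Adj x y ↔ D x y ∨ D y x)
    (h2 : ∀ x y, D x y → ¬ D y x) (h3 : Transitive D)
    (hc : G.Connected) (hnc : G ≠ ⊤) :
    Udim G ≤ starNum G - 1 := by
  have : IsStrictOrder V D := { irrefl := fun a h => h2 a a h h, trans := @h3 }
  let : PartialOrder V := partialOrderOfSO D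
  have hG : G.IsIncomparabilityGraph := h1
  have hs := hc.two_le_starNum hnc
  refine Udim_le_of_dist_le (f := Order.natHeight) (by omega) (fun x y hxy => ?_)
    fun x y => hG.natHeight_ne_of_not_adj
  have := hG.dist_natHeight_lt_of_adj (fun r L hL => hL.card_le_starNum) hxy
  omega
end
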